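/- If A ⊆ V(T_n) contains no vertex on the diagonal {v : v1+v2 = n}, then |N(A)| ≥ |N(C)|, where C is the initial segment of the simplicial ordering of size |A|. -/

import Mathlib

/-- Vertex set of the triangular grid graph `T_n`. -/
def TnV (n : ℕ) : Finset (ℕ × ℕ) :=
  (Finset.range (n+1) ×ˢ Finset.range (n+1)).filter (fun v => v.1 + v.2 ≤ n)

/-- Adjacency in the triangular grid graph. -/
def adj (u v : ℕ × ℕ) : Prop :=
  (v.1 = u.1 + 1 ∧ v.2 = u.2) ∨ (u.1 = v.1 + 1 ∧ u.2 = v.2) ∨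
  (v.2 = u.2 + 1 ∧ v.1 = u.1) ∨ (u.2 = v.2 + 1 ∧ u.1 = v.1) ∨
  (v.1 = u.1 + 1 ∧ u.2 = v.2 + 1) ∨ (u.1 = v.1 + 1 ∧ v.2 = u.2 + 1)

instance : ∀ u v : ℕ × ℕ, Decidable (adj u v) := fun u v => by
  unfold adj; infer_instance

/-- The (exterior) vertex boundary of `A` in `T_n`. -/
def boundary (n : ℕ) (A : Finset (ℕ × ℕ)) : Finset (ℕ × ℕ) :=
  (TnV n).filter (fun v => v ∉ A ∧ ∃ u ∈ A, adj u v)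

/-- The neighborhood `N(A)` of `A` in `T_n`. -/
def nbhd (n : ℕ) (A : Finset (ℕ × ℕ)) : Finset (ℕ × ℕ) :=
  (TnV n).filter (fun v => v ∈ A ∨ ∃ u ∈ A, adj u v)

/-- `sle u v` : `u` comes before (or equals) `v` in the simplicial ordering. -/
def sle (u v : ℕ × ℕ) : Prop :=
  u.1 + u.2 < v.1 + v.2 ∨ (u.1 + u.2 = v.1 + v.2 ∧ v.1 ≤ u.1)

/-- `C` is an initial segment of the simplicial ordering on `V(T_n)`. -/
def IsInitSeg (n : ℕ) (C : Finset (ℕ × ℕ)) : Prop :=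
  C ⊆ TnV n ∧ ∀ v ∈ C, ∀ u ∈ TnV n, sle u v → u ∈ C

/-- `D` is a final segment of the simplicial ordering on `V(T_n)`. -/
def IsFinalSeg (n : ℕ) (D : Finset (ℕ × ℕ)) : Prop :=
  D ⊆ TnV n ∧ ∀ v ∈ D, ∀ u ∈ TnV n, sle v u → u ∈ D


lemma mem_TnV {n : ℕ} {v : ℕ × ℕ} : v ∈ TnV n ↔ v.1 + v.2 ≤ n := by
  simp only [TnV, Finset.mem_filter, Finset.mem_product, Finset.mem_range]
  omega

def tri : ℕ → ℕ := fun j => ∑ i ∈ Finset.range j, (i+1)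

lemma tri_succ (j : ℕ) : tri (j+1) = tri j + (j+1) := Finset.sum_range_succ _ _

lemma le_tri (j : ℕ) : j ≤ tri j := by
  induction j with
  | zero => simp [tri]
  | succ j ih => rw [tri_succ]; omega

lemma tri_mono : Monotone tri := fun _ _ h =>
  Finset.sum_le_sum_of_subset (Finset.range_subset_range.mpr h)

lemma arith : ∀ (m : ℕ) (a b : ℕ → ℕ) (k : ℕ),
    (∀ i, i ≤ m → a i ≤ b i) →
    (∀ i, i ≤ m → 1 ≤ a i → a i + 1 ≤ b (i+1)) →
    tri k < ∑ i ∈ Finset.range (m+1), a i →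
    ∑ i ∈ Finset.range (m+1), a i + k + 2 ≤ ∑ i ∈ Finset.range (m+2), b i := by
  intro m
  induction m with
  | zero =>
    intro a b k h1 h2 h3
    simp only [Finset.sum_range_succ, Finset.sum_range_zero, zero_add] at *
    have := le_tri k
    have hb0 := h1 0 (by omega)
    have hb1 : a 0 + 1 ≤ b 1 := h2 0 (by omega) (by omega)
    omega
  | succ m ih =>
    intro a b k h1 h2 h3
    have h3 : tri k < ∑ i ∈ Finset.range (m+2), a i := h3
    show ∑ i ∈ Finset.range (m+2), a i + k + 2 ≤ ∑ i ∈ Finset.range (m+3), b i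
    by_cases hz : a (m+1) = 0
    · have h3' : tri k < ∑ i ∈ Finset.range (m+1), a i := by
        rwa [Finset.sum_range_succ, hz, add_zero] at h3
      have key : ∑ i ∈ Finset.range (m+1), a i + k + 2 ≤ ∑ i ∈ Finset.range (m+2), b i :=
        ih a b k (fun i hi => h1 i (by omega)) (fun i hi => h2 i (by omega)) h3'
      have e1 : ∑ i ∈ Finset.range (m+3), b i
          = ∑ i ∈ Finset.range (m+2), b i + b (m+2) := Finset.sum_range_succ _ _
      have e2 : ∑ i ∈ Finset.range (m+2), a i
          = ∑ i ∈ Finset.range (m+1), a i + a (m+1) := Finset.sum_range_succ _ _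
      omega
    · have hb : a (m+1) + 1 ≤ b (m+2) := h2 (m+1) (le_refl _) (by omega)
      have e1 : ∑ i ∈ Finset.range (m+3), b i
          = ∑ i ∈ Finset.range (m+2), b i + b (m+2) := Finset.sum_range_succ _ _
      have e2 : ∑ i ∈ Finset.range (m+2), a i
          = ∑ i ∈ Finset.range (m+1), a i + a (m+1) := Finset.sum_range_succ _ _
      by_cases hk : k + 1 ≤ a (m+1)
      · have hsum : ∑ i ∈ Finset.range (m+2), a i ≤ ∑ i ∈ Finset.range (m+2), b i :=
          Finset.sum_le_sum (fun i hi => h1 i (by have := Finset.mem_range.mp hi; omega))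
        omega
      · have hk1 : 1 ≤ k := by omega
        have htk : tri k = tri (k-1) + k := by
          have := tri_succ (k-1); rw [Nat.sub_add_cancel hk1] at this; omega
        have h3' : tri (k-1) < ∑ i ∈ Finset.range (m+1), a i := by omega
        have key : ∑ i ∈ Finset.range (m+1), a i + (k-1) + 2 ≤ ∑ i ∈ Finset.range (m+2), b i :=
          ih a b (k-1) (fun i hi => h1 i (by omega)) (fun i hi => h2 i (by omega)) h3'
        omega

lemma card_diag_tail (n i c : ℕ) (h : i ≤ n) (hc : c ≤ i) :
    ((TnV n).filter (fun v => v.1 + v.2 = i ∧ c ≤ v.1)).card = i + 1 - c := by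
  have he : (TnV n).filter (fun v => v.1 + v.2 = i ∧ c ≤ v.1)
      = (Finset.range (i+1-c)).image (fun t => (c + t, i - c - t)) := by
    ext ⟨x, y⟩
    simp only [Finset.mem_filter, mem_TnV, Finset.mem_image, Finset.mem_range]
    constructor
    · rintro ⟨h1, h2, h3⟩
      exact ⟨x - c, by omega, by simp [Prod.ext_iff]; omega⟩
    · rintro ⟨t, ht, he⟩
      simp [Prod.ext_iff] at he
      omega
  rw [he, Finset.card_image_of_injective _ (fun u v e => by
    have := congrArg Prod.fst e; simpa using this), Finset.card_range]

lemma card_diag (n i : ℕ) (h : i ≤ n) :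
    ((TnV n).filter (fun v => v.1 + v.2 = i)).card = i + 1 := by
  have := card_diag_tail n i 0 h (Nat.zero_le _)
  simpa using this

lemma card_tri (n : ℕ) : ∀ j, j ≤ n →
    ((TnV n).filter (fun v => v.1 + v.2 ≤ j)).card = tri (j+1) := by
  intro j
  induction j with
  | zero =>
    intro _
    have : (TnV n).filter (fun v => v.1 + v.2 ≤ 0) = {(0,0)} := by
      ext ⟨x,y⟩
      simp [Finset.mem_filter, mem_TnV, Prod.ext_iff]
      omega
    rw [this]; simp [tri]
  | succ j ih =>
    intro hj
    have hs : (TnV n).filter (fun v => v.1 + v.2 ≤ j+1)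
        = (TnV n).filter (fun v => v.1 + v.2 ≤ j) ∪ (TnV n).filter (fun v => v.1 + v.2 = j+1) := by
      ext v
      simp only [Finset.mem_filter, Finset.mem_union]
      constructor
      · rintro ⟨hv, h2⟩
        rcases Nat.lt_or_ge (v.1+v.2) (j+1) with h|h
        · exact Or.inl ⟨hv, by omega⟩
        · exact Or.inr ⟨hv, by omega⟩
      · rintro (⟨hv,h2⟩|⟨hv,h2⟩) <;> exact ⟨hv, by omega⟩
    have hd : Disjoint ((TnV n).filter (fun v => v.1 + v.2 ≤ j))
        ((TnV n).filter (fun v => v.1 + v.2 = j+1)) := by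
      rw [Finset.disjoint_left]
      intro v hv hv'
      simp only [Finset.mem_filter] at hv hv'
      omega
    rw [hs, Finset.card_union_of_disjoint hd, ih (by omega), card_diag n (j+1) hj]
    have := tri_succ j; have := tri_succ (j+1); omega

lemma shadow (n i : ℕ) (A : Finset (ℕ × ℕ)) (hi : i + 1 ≤ n)
    (hne : (A.filter (fun v => v.1 + v.2 = i)).Nonempty) :
    (A.filter (fun v => v.1 + v.2 = i)).card + 1
      ≤ ((nbhd n A).filter (fun v => v.1 + v.2 = i + 1)).card := by
  set S := A.filter (fun v => v.1 + v.2 = i) with hS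
  obtain ⟨w, hw, hmax⟩ := S.exists_max_image (fun v => v.1) hne
  have hmemS : ∀ v ∈ S, v ∈ A ∧ v.1 + v.2 = i := by
    intro v hv; exact Finset.mem_filter.mp hv
  have himg : ∀ v ∈ S, (v.1, v.2 + 1) ∈ (nbhd n A).filter (fun v => v.1 + v.2 = i + 1) := by
    intro v hv
    obtain ⟨hvA, hvs⟩ := hmemS v hv
    refine Finset.mem_filter.mpr ⟨Finset.mem_filter.mpr ⟨mem_TnV.mpr (by simp; omega), ?_⟩, by simp; omega⟩
    exact Or.inr ⟨v, hvA, Or.inr (Or.inr (Or.inl ⟨rfl, rfl⟩))⟩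
  have hw' : (w.1 + 1, w.2) ∈ (nbhd n A).filter (fun v => v.1 + v.2 = i + 1) := by
    obtain ⟨hvA, hvs⟩ := hmemS w hw
    refine Finset.mem_filter.mpr ⟨Finset.mem_filter.mpr ⟨mem_TnV.mpr (by simp; omega), ?_⟩, by simp; omega⟩
    exact Or.inr ⟨w, hvA, Or.inl ⟨rfl, rfl⟩⟩
  have hnotmem : (w.1 + 1, w.2) ∉ S.image (fun v => (v.1, v.2 + 1)) := by
    intro hmem
    obtain ⟨v, hv, he⟩ := Finset.mem_image.mp hmem
    have h1 := congrArg Prod.fst he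
    simp at h1
    have := hmax v hv
    omega
  have hsub : insert (w.1 + 1, w.2) (S.image (fun v => (v.1, v.2 + 1)))
      ⊆ (nbhd n A).filter (fun v => v.1 + v.2 = i + 1) := by
    intro x hx
    rcases Finset.mem_insert.mp hx with h|h
    · exact h ▸ hw'
    · obtain ⟨v, hv, he⟩ := Finset.mem_image.mp h
      exact he ▸ himg v hv
  have hcard := Finset.card_le_card hsub
  rw [Finset.card_insert_of_notMem hnotmem,
    Finset.card_image_of_injective _ (fun u v e => by
      have h1 := congrArg Prod.fst e
      have h2 := congrArg Prod.snd e
      simp at h1 h2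
      exact Prod.ext h1 h2)] at hcard
  omega

theorem nbhd_ge_initial_of_diag_empty (n : ℕ) (A C : Finset (ℕ × ℕ))
    (hA : A ⊆ TnV n) (hdiag : ∀ v ∈ A, v.1 + v.2 ≠ n)
    (hC : IsInitSeg n C) (hcard : C.card = A.card) :
    (nbhd n C).card ≤ (nbhd n A).card := by
  rcases Finset.eq_empty_or_nonempty A with rfl | hAne
  · have hC0 : C = ∅ := Finset.card_eq_zero.mp (by simpa using hcard)
    rw [hC0]
  obtain ⟨v0, hv0⟩ := hAne
  have hs1 : 1 ≤ A.card := Finset.card_pos.mpr ⟨v0, hv0⟩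
  have hn1 : 1 ≤ n := by
    have := mem_TnV.mp (hA hv0); have := hdiag v0 hv0; omega
  -- A is inside the triangle of height n-1
  have hAsub : A ⊆ (TnV n).filter (fun v => v.1 + v.2 ≤ n-1) := fun v hv =>
    Finset.mem_filter.mpr ⟨hA hv, by have := mem_TnV.mp (hA hv); have := hdiag v hv; omega⟩
  have hstri : A.card ≤ tri n := by
    have hcc := Finset.card_le_card hAsub
    rw [card_tri n (n-1) (by omega)] at hcc
    have he : n - 1 + 1 = n := by omega
    rwa [he] at hcc
  -- the parameter k
  set k := Nat.findGreatest (fun j => tri j < A.card) A.card with hkdef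
  have hks : tri k < A.card :=
    Nat.findGreatest_spec (P := fun j => tri j < A.card) (Nat.zero_le A.card)
      (show tri 0 < A.card by simpa [tri] using hs1)
  have hks2 : A.card ≤ tri (k+1) := by
    by_contra h
    push_neg at h
    have h1 : k + 1 ≤ A.card := le_trans (by have := le_tri (k+1); omega) (le_of_lt h)
    have := Nat.le_findGreatest (P := fun j => tri j < A.card) h1 h
    omega
  have hkn : k + 1 ≤ n := by
    by_contra h
    have : tri n ≤ tri k := tri_mono (by omega)
    omega
  ---- Lower bound : A.card + k + 2 ≤ (nbhd n A).card
  set m := A.sup (fun v => v.1 + v.2) with hm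
  have hmn : m + 1 ≤ n := by
    have hlt : m < n := (Finset.sup_lt_iff (show (⊥ : ℕ) < n from hn1)).mpr
      (fun v hv => by
        have h1 := mem_TnV.mp (hA hv); have h2 := hdiag v hv
        show v.1 + v.2 < n; omega)
    omega
  have hsum_a : A.card = ∑ i ∈ Finset.range (m+1), (A.filter (fun v => v.1 + v.2 = i)).card :=
    Finset.card_eq_sum_card_fiberwise (fun v hv =>
      Finset.mem_range.mpr (by
        have hle : v.1 + v.2 ≤ m := Finset.le_sup (f := fun v : ℕ × ℕ => v.1 + v.2) hv
        omega))
  have hAnb : A ⊆ nbhd n A := fun v hv => Finset.mem_filter.mpr ⟨hA hv, Or.inl hv⟩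
  have h1 : ∀ i, i ≤ m → (A.filter (fun v => v.1 + v.2 = i)).card
      ≤ ((nbhd n A).filter (fun v => v.1 + v.2 = i)).card :=
    fun i _ => Finset.card_le_card (Finset.filter_subset_filter _ hAnb)
  have h2 : ∀ i, i ≤ m → 1 ≤ (A.filter (fun v => v.1 + v.2 = i)).card →
      (A.filter (fun v => v.1 + v.2 = i)).card + 1
        ≤ ((nbhd n A).filter (fun v => v.1 + v.2 = i + 1)).card :=
    fun i hi hc => shadow n i A (by omega) (Finset.card_pos.mp hc)
  obtain ⟨fa, hfa⟩ : ∃ f : ℕ → ℕ, f = fun i => (A.filter (fun v => v.1 + v.2 = i)).card := ⟨_, rfl⟩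
  obtain ⟨fb, hfb⟩ : ∃ f : ℕ → ℕ, f = fun i => ((nbhd n A).filter (fun v => v.1 + v.2 = i)).card :=
    ⟨_, rfl⟩
  have h1' : ∀ i, i ≤ m → fa i ≤ fb i := by rw [hfa, hfb]; exact h1
  have h2' : ∀ i, i ≤ m → 1 ≤ fa i → fa i + 1 ≤ fb (i+1) := by rw [hfa, hfb]; exact h2
  have h3' : tri k < ∑ i ∈ Finset.range (m+1), fa i := by
    rw [hfa]
    simp only []
    omega
  have harith0 := arith m fa fb k h1' h2' h3'
  simp only [hfa, hfb] at harith0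
  have hb_sum : ∑ i ∈ Finset.range (m+2), ((nbhd n A).filter (fun v => v.1 + v.2 = i)).card
      ≤ (nbhd n A).card := by
    have e : ((nbhd n A).filter (fun v => v.1 + v.2 ≤ m+1)).card
        = ∑ i ∈ Finset.range (m+2),
            (((nbhd n A).filter (fun v => v.1 + v.2 ≤ m+1)).filter (fun v => v.1 + v.2 = i)).card :=
      Finset.card_eq_sum_card_fiberwise (fun v hv =>
        Finset.mem_range.mpr (by have := (Finset.mem_filter.mp hv).2; omega))
    have e2 : ∀ i ∈ Finset.range (m+2),
        (((nbhd n A).filter (fun v => v.1 + v.2 ≤ m+1)).filter (fun v => v.1 + v.2 = i))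
          = (nbhd n A).filter (fun v => v.1 + v.2 = i) := by
      intro i hi
      have hi' := Finset.mem_range.mp hi
      ext v
      simp only [Finset.mem_filter]
      constructor
      · rintro ⟨⟨ha, _⟩, hb⟩; exact ⟨ha, hb⟩
      · rintro ⟨ha, hb⟩; exact ⟨⟨ha, by omega⟩, hb⟩
    calc ∑ i ∈ Finset.range (m+2), ((nbhd n A).filter (fun v => v.1 + v.2 = i)).card
        = ((nbhd n A).filter (fun v => v.1 + v.2 ≤ m+1)).card := by
          rw [e]; exact Finset.sum_congr rfl (fun i hi => by rw [e2 i hi])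
      _ ≤ (nbhd n A).card := Finset.card_le_card (Finset.filter_subset _ _)
  have hlow : A.card + k + 2 ≤ (nbhd n A).card := by
    have e : A.card + k + 2
        ≤ ∑ i ∈ Finset.range (m+2), ((nbhd n A).filter (fun v => v.1 + v.2 = i)).card := by
      rw [hsum_a]
      exact harith0
    exact le_trans e hb_sum
  ---- Upper bound : (nbhd n C).card ≤ A.card + k + 2
  have hC1 : ∀ v ∈ C, v.1 + v.2 ≤ k := by
    intro v hv
    by_contra hgt
    push_neg at hgt
    have hvT := hC.1 hv
    have hvn : v.1 + v.2 ≤ n := mem_TnV.mp hvT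
    have hsubset : insert v ((TnV n).filter (fun u => u.1 + u.2 ≤ v.1 + v.2 - 1)) ⊆ C := by
      intro u hu
      rcases Finset.mem_insert.mp hu with rfl | hu
      · exact hv
      · obtain ⟨huT, hus⟩ := Finset.mem_filter.mp hu
        exact hC.2 v hv u huT (Or.inl (by omega))
    have hni : v ∉ (TnV n).filter (fun u => u.1 + u.2 ≤ v.1 + v.2 - 1) := by
      intro h; have := (Finset.mem_filter.mp h).2; omega
    have hcc := Finset.card_le_card hsubset
    rw [Finset.card_insert_of_notMem hni, card_tri n (v.1 + v.2 - 1) (by omega)] at hcc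
    have he : v.1 + v.2 - 1 + 1 = v.1 + v.2 := by omega
    rw [he] at hcc
    have hmono : tri (k+1) ≤ tri (v.1 + v.2) := tri_mono (by omega)
    omega
  have hC2 : ∀ v ∈ C, v.1 + v.2 = k → tri (k+1) ≤ A.card + v.1 := by
    intro v hv hvs
    rcases Nat.eq_zero_or_pos k with hk0 | hkpos
    · have : tri (k+1) = tri k + (k+1) := tri_succ k
      have h0 : tri k = 0 := by rw [hk0]; simp [tri]
      omega
    · have hsubset : ((TnV n).filter (fun u => u.1 + u.2 ≤ k-1))
          ∪ ((TnV n).filter (fun u => u.1 + u.2 = k ∧ v.1 ≤ u.1)) ⊆ C := by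
        intro u hu
        rcases Finset.mem_union.mp hu with hu | hu
        · obtain ⟨huT, hus⟩ := Finset.mem_filter.mp hu
          exact hC.2 v hv u huT (Or.inl (by omega))
        · obtain ⟨huT, hus1, hus2⟩ := Finset.mem_filter.mp hu
          exact hC.2 v hv u huT (Or.inr ⟨by omega, hus2⟩)
      have hd : Disjoint ((TnV n).filter (fun u => u.1 + u.2 ≤ k-1))
          ((TnV n).filter (fun u => u.1 + u.2 = k ∧ v.1 ≤ u.1)) := by
        rw [Finset.disjoint_left]
        intro u hu hu'
        have := (Finset.mem_filter.mp hu).2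
        have := (Finset.mem_filter.mp hu').2
        omega
      have hcc := Finset.card_le_card hsubset
      rw [Finset.card_union_of_disjoint hd, card_tri n (k-1) (by omega),
        card_diag_tail n k v.1 (by omega) (by omega)] at hcc
      have he : k - 1 + 1 = k := by omega
      rw [he] at hcc
      have := tri_succ k
      omega
  have hXsub : nbhd n C ⊆ ((TnV n).filter (fun v => v.1 + v.2 ≤ k))
      ∪ ((TnV n).filter (fun v => v.1 + v.2 = k+1 ∧ (tri (k+1) - A.card) ≤ v.1)) := by
    intro v hv
    obtain ⟨hvT, hor⟩ := Finset.mem_filter.mp hv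
    rcases hor with hvC | ⟨u, huC, hadj⟩
    · exact Finset.mem_union_left _ (Finset.mem_filter.mpr ⟨hvT, hC1 v hvC⟩)
    · have hu_le := hC1 u huC
      have hcase2 : v.1 + v.2 ≤ k ∨ (v.1 + v.2 = k + 1 ∧ tri (k+1) - A.card ≤ v.1) := by
        rcases hadj with ⟨e1,e2⟩|⟨e1,e2⟩|⟨e1,e2⟩|⟨e1,e2⟩|⟨e1,e2⟩|⟨e1,e2⟩
        · by_cases hle : v.1 + v.2 ≤ k
          · exact Or.inl hle
          · have husum : u.1 + u.2 = k := by omega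
            have := hC2 u huC husum
            exact Or.inr ⟨by omega, by omega⟩
        · exact Or.inl (by omega)
        · by_cases hle : v.1 + v.2 ≤ k
          · exact Or.inl hle
          · have husum : u.1 + u.2 = k := by omega
            have := hC2 u huC husum
            exact Or.inr ⟨by omega, by omega⟩
        · exact Or.inl (by omega)
        · exact Or.inl (by omega)
        · exact Or.inl (by omega)
      rcases hcase2 with h | h
      · exact Finset.mem_union_left _ (Finset.mem_filter.mpr ⟨hvT, h⟩)
      · exact Finset.mem_union_right _ (Finset.mem_filter.mpr ⟨hvT, h⟩)
  have hup : (nbhd n C).card ≤ A.card + k + 2 := by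
    have hcc := Finset.card_le_card hXsub
    have hcu := Finset.card_union_le ((TnV n).filter (fun v => v.1 + v.2 ≤ k))
      ((TnV n).filter (fun v => v.1 + v.2 = k+1 ∧ (tri (k+1) - A.card) ≤ v.1))
    rw [card_tri n k (by omega), card_diag_tail n (k+1) (tri (k+1) - A.card) hkn
      (by have := tri_succ k; omega)] at hcu
    have := tri_succ k
    omega
  omega
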